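/- arXiv:1407.3230 — 2 statements merged into one kernel-verified Lean document; each statement's English description precedes it below -/
import Mathlib

section
/- Let F ⊆ 2^[n] be shattering-extremal and let S be a maximal element of Sh(F), i.e. S ∈ Sh(F) and no proper superset of S belongs to Sh(F). Then S is uniquely strongly shattered by F: there is exactly one set I ⊆ [n] \ S such that {H ∪ I : H ⊆ S} ⊆ F. -/
open scoped symmDiff

/-- `𝓕` shatters `S`: every subset of `S` is the trace of some member of `𝓕` on `S`. -/
def Shatters {n : ℕ} (𝓕 : Finset (Finset (Fin n))) (S : Finset (Fin n)) : Prop :=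
  ∀ T ⊆ S, ∃ F ∈ 𝓕, F ∩ S = T

/-- `𝓕` strongly shatters `S`: there is `I ⊆ [n] \ S` with `{H ∪ I : H ⊆ S} ⊆ 𝓕`. -/
def StronglyShatters {n : ℕ} (𝓕 : Finset (Finset (Fin n))) (S : Finset (Fin n)) : Prop :=
  ∃ I : Finset (Fin n), I ⊆ Sᶜ ∧ ∀ H ⊆ S, H ∪ I ∈ 𝓕

open Classical in
/-- The family of subsets of `[n]` shattered by `𝓕`. -/
noncomputable def Sh {n : ℕ} (𝓕 : Finset (Finset (Fin n))) : Finset (Finset (Fin n)) :=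
  Finset.univ.filter (Shatters 𝓕)

open Classical in
/-- The family of subsets of `[n]` strongly shattered by `𝓕`. -/
noncomputable def st {n : ℕ} (𝓕 : Finset (Finset (Fin n))) : Finset (Finset (Fin n)) :=
  Finset.univ.filter (StronglyShatters 𝓕)

/-- `𝓕` is shattering-extremal if it shatters exactly `|𝓕|` sets. -/
def Extremal {n : ℕ} (𝓕 : Finset (Finset (Fin n))) : Prop :=
  (Sh 𝓕).card = 𝓕.card

/-- The Vapnik–Chervonenkis dimension: the maximum cardinality of a shattered set. -/
noncomputable def dimVC {n : ℕ} (𝓕 : Finset (Finset (Fin n))) : ℕ :=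
  (Sh 𝓕).sup Finset.card


/-!
Split `𝒜` along an element `a` into `𝒜₀ = {u ∈ 𝒜 | a ∉ u}` and `𝒜₁ = {u \ {a} | a ∈ u ∈ 𝒜}`.
Pajor's inequality `|𝒜| ≤ |Sh 𝒜|` comes from
`|𝒜₀| + |𝒜₁| ≤ |Sh 𝒜₀| + |Sh 𝒜₁| = |Sh 𝒜₀ ∪ Sh 𝒜₁| + |Sh 𝒜₀ ∩ Sh 𝒜₁|`, the union consisting of
sets shattered by `𝒜` that avoid `a` and the intersection, with `a` added, of those containing `a`.
For an extremal `𝒜` the chain is tight, so `𝒜₀`, `𝒜₁` and then also `𝒜₀ ∩ 𝒜₁` are extremal, and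
induction on the ground set shows that every set shattered by an extremal family is strongly
shattered. Finally two witnesses `I`, `J` of a strongly shattered `S` with `a ∈ J \ I` together
shatter `S ∪ {a}`, so a maximal shattered set has only one witness.
-/

namespace Finset

variable {α : Type*} [DecidableEq α] {𝒜 ℬ 𝒞 : Finset (Finset α)} {s I J : Finset α} {a : α}

def StronglyShatters (𝒜 : Finset (Finset α)) (s : Finset α) : Prop :=
  ∃ I, Disjoint I s ∧ ∀ t ⊆ s, t ∪ I ∈ 𝒜

def IsShatteringExtremal (𝒜 : Finset (Finset α)) : Prop :=
  #𝒜.shatterer = #𝒜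

lemma stronglyShatters_empty_of_nonempty (h : 𝒜.Nonempty) : 𝒜.StronglyShatters ∅ := by
  obtain ⟨I, hI⟩ := h
  refine ⟨I, disjoint_empty_right I, fun t ht => ?_⟩
  rwa [subset_empty.mp ht, empty_union]

lemma StronglyShatters.mono (h : 𝒜 ⊆ ℬ) : 𝒜.StronglyShatters s → ℬ.StronglyShatters s :=
  fun ⟨I, hIs, hI⟩ => ⟨I, hIs, fun t ht => h (hI t ht)⟩

lemma StronglyShatters.of_memberSubfamily (ha : a ∉ s)
    (h : (memberSubfamily a 𝒜).StronglyShatters s) : 𝒜.StronglyShatters s := by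
  obtain ⟨I, hIs, hI⟩ := h
  refine ⟨insert a I, disjoint_insert_left.mpr ⟨ha, hIs⟩, fun t ht => ?_⟩
  rw [union_insert]
  exact (mem_memberSubfamily.mp (hI t ht)).1

lemma StronglyShatters.insert_of_inter
    (h : (nonMemberSubfamily a 𝒜 ∩ memberSubfamily a 𝒜).StronglyShatters s) :
    𝒜.StronglyShatters (insert a s) := by
  obtain ⟨I, hIs, hI⟩ := h
  have haI : a ∉ I := by
    simpa using (mem_nonMemberSubfamily.mp (mem_inter.mp (hI ∅ (empty_subset s))).1).2
  refine ⟨I, disjoint_insert_right.mpr ⟨haI, hIs⟩, fun t ht => ?_⟩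
  by_cases hat : a ∈ t
  · have hmem := (mem_inter.mp (hI (t.erase a) (subset_insert_iff.mp ht))).2
    rw [mem_memberSubfamily, ← insert_union, insert_erase hat] at hmem
    exact hmem.1
  · have hts : t ⊆ s := (subset_insert_iff_of_notMem hat).mp ht
    exact (mem_nonMemberSubfamily.mp (mem_inter.mp (hI t hts)).1).1

lemma notMem_of_shatters (h : ∀ u ∈ 𝒜, a ∉ u) (hs : 𝒜.Shatters s) : a ∉ s := by
  obtain ⟨u, hu, hsu⟩ := hs.exists_superset
  exact notMem_mono hsu (h u hu)

lemma Shatters.of_mem_or_insert_mem (hℬ : ∀ u ∈ ℬ, u ∈ 𝒜 ∨ insert a u ∈ 𝒜) (ha : a ∉ s)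
    (hs : ℬ.Shatters s) : 𝒜.Shatters s := by
  intro t ht
  obtain ⟨u, hu, rfl⟩ := hs ht
  rcases hℬ u hu with hu | hu
  · exact ⟨u, hu, rfl⟩
  · exact ⟨insert a u, hu, inter_insert_of_notMem ha⟩

lemma Shatters.erase_nonMemberSubfamily (hs : 𝒜.Shatters s) (ha : a ∈ s) :
    (nonMemberSubfamily a 𝒜).Shatters (s.erase a) := by
  intro t ht
  have hat : a ∉ t := fun h => notMem_erase a s (ht h)
  obtain ⟨u, hu, hsu⟩ := hs (ht.trans (erase_subset a s))
  have hau : a ∉ u := fun h => hat (hsu ▸ mem_inter.mpr ⟨ha, h⟩)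
  exact ⟨u, mem_nonMemberSubfamily.mpr ⟨hu, hau⟩, by rw [erase_inter, hsu, erase_eq_of_notMem hat]⟩

lemma Shatters.erase_memberSubfamily (hs : 𝒜.Shatters s) (ha : a ∈ s) :
    (memberSubfamily a 𝒜).Shatters (s.erase a) := by
  intro t ht
  have hat : a ∉ t := fun h => notMem_erase a s (ht h)
  obtain ⟨u, hu, hsu⟩ := hs (insert_subset ha (ht.trans (erase_subset a s)))
  have hau : a ∈ u := (mem_inter.mp (hsu ▸ mem_insert_self a t)).2
  refine ⟨u.erase a, mem_memberSubfamily.mpr ⟨by rwa [insert_erase hau], notMem_erase a u⟩, ?_⟩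
  rw [erase_inter, inter_erase, erase_idem, hsu, erase_insert hat]

lemma Shatters.insert_of_memberSubfamily (h₁ : (memberSubfamily a 𝒜).Shatters s)
    (h₀ : (nonMemberSubfamily a 𝒜).Shatters s) : 𝒜.Shatters (insert a s) := by
  intro t ht
  by_cases hat : a ∈ t
  · obtain ⟨u, hu, hsu⟩ := h₁ (subset_insert_iff.mp ht)
    refine ⟨insert a u, (mem_memberSubfamily.mp hu).1, ?_⟩
    rw [← insert_inter_distrib, hsu, insert_erase hat]
  · obtain ⟨u, hu, hsu⟩ := h₀ ((subset_insert_iff_of_notMem hat).mp ht)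
    refine ⟨u, (mem_nonMemberSubfamily.mp hu).1, ?_⟩
    rw [insert_inter_of_notMem (mem_nonMemberSubfamily.mp hu).2, hsu]

lemma shatterer_union_subset_filter_notMem :
    (nonMemberSubfamily a 𝒜 ∪ memberSubfamily a 𝒜).shatterer ⊆ {s ∈ 𝒜.shatterer | a ∉ s} := by
  intro s hs
  rw [mem_shatterer] at hs
  have hmem : ∀ u ∈ nonMemberSubfamily a 𝒜 ∪ memberSubfamily a 𝒜,
      (u ∈ 𝒜 ∨ insert a u ∈ 𝒜) ∧ a ∉ u := by
    intro u hu
    rcases mem_union.mp hu with hu | hu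
    · exact ⟨.inl (mem_nonMemberSubfamily.mp hu).1, (mem_nonMemberSubfamily.mp hu).2⟩
    · exact ⟨.inr (mem_memberSubfamily.mp hu).1, (mem_memberSubfamily.mp hu).2⟩
  have has : a ∉ s := notMem_of_shatters (fun u hu => (hmem u hu).2) hs
  exact mem_filter.mpr ⟨mem_shatterer.mpr (hs.of_mem_or_insert_mem (fun u hu => (hmem u hu).1) has),
    has⟩

lemma card_shatterer_inter_le_card_filter_mem :
    #((nonMemberSubfamily a 𝒜).shatterer ∩ (memberSubfamily a 𝒜).shatterer) ≤
      #{s ∈ 𝒜.shatterer | a ∈ s} := by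
  have hnotMem : ∀ s ∈ (nonMemberSubfamily a 𝒜).shatterer ∩ (memberSubfamily a 𝒜).shatterer,
      a ∉ s := fun s hs => notMem_of_shatters (fun u hu => (mem_nonMemberSubfamily.mp hu).2)
        (mem_shatterer.mp (mem_inter.mp hs).1)
  refine card_le_card_of_injOn (insert a) (fun s hs => ?_) (fun s hs t ht hst => ?_)
  · obtain ⟨h₀, h₁⟩ := mem_inter.mp hs
    exact mem_filter.mpr ⟨mem_shatterer.mpr ((mem_shatterer.mp h₁).insert_of_memberSubfamily
      (mem_shatterer.mp h₀)), mem_insert_self a s⟩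
  · rw [← erase_insert (hnotMem s hs), ← erase_insert (hnotMem t ht)]
    exact congrArg (erase · a) hst

lemma IsShatteringExtremal.nonMemberSubfamily_memberSubfamily (h : 𝒜.IsShatteringExtremal)
    (a : α) :
    (nonMemberSubfamily a 𝒜).IsShatteringExtremal ∧ (memberSubfamily a 𝒜).IsShatteringExtremal ∧
      {s ∈ 𝒜.shatterer | a ∉ s} =
        (nonMemberSubfamily a 𝒜).shatterer ∪ (memberSubfamily a 𝒜).shatterer := by
  have hsub : (nonMemberSubfamily a 𝒜).shatterer ∪ (memberSubfamily a 𝒜).shatterer ⊆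
      {s ∈ 𝒜.shatterer | a ∉ s} :=
    union_subset_iff.mpr ⟨fun s hs => shatterer_union_subset_filter_notMem
      (shatterer_mono subset_union_left hs), fun s hs => shatterer_union_subset_filter_notMem
      (shatterer_mono subset_union_right hs)⟩
  have hsplit := card_memberSubfamily_add_card_nonMemberSubfamily a 𝒜
  have hfilter := card_filter_add_card_filter_not (s := 𝒜.shatterer) (fun s => a ∈ s)
  have hunion := card_union_add_card_inter (nonMemberSubfamily a 𝒜).shatterer
    (memberSubfamily a 𝒜).shatterer
  have h₀ := card_le_card_shatterer (nonMemberSubfamily a 𝒜)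
  have h₁ := card_le_card_shatterer (memberSubfamily a 𝒜)
  have hinter := card_shatterer_inter_le_card_filter_mem (𝒜 := 𝒜) (a := a)
  have hle := card_le_card hsub
  unfold IsShatteringExtremal at *
  refine ⟨by omega, by omega, (eq_of_subset_of_card_le hsub (by omega)).symm⟩

lemma IsShatteringExtremal.inter (hℬ : ℬ.IsShatteringExtremal) (h𝒞 : 𝒞.IsShatteringExtremal)
    (h : (ℬ ∪ 𝒞).shatterer ⊆ ℬ.shatterer ∪ 𝒞.shatterer) :
    (ℬ ∩ 𝒞).IsShatteringExtremal ∧ (ℬ ∩ 𝒞).shatterer = ℬ.shatterer ∩ 𝒞.shatterer := by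
  have hsub : (ℬ ∩ 𝒞).shatterer ⊆ ℬ.shatterer ∩ 𝒞.shatterer :=
    subset_inter (shatterer_mono inter_subset_left) (shatterer_mono inter_subset_right)
  have hfam := card_union_add_card_inter ℬ 𝒞
  have hsh := card_union_add_card_inter ℬ.shatterer 𝒞.shatterer
  have hunion := (card_le_card_shatterer (ℬ ∪ 𝒞)).trans (card_le_card h)
  have hinter := card_le_card_shatterer (ℬ ∩ 𝒞)
  have hle := card_le_card hsub
  unfold IsShatteringExtremal at *
  exact ⟨by omega, eq_of_subset_of_card_le hsub (by omega)⟩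

lemma IsShatteringExtremal.stronglyShatters_of_forall_subset {G : Finset α}
    (hG : ∀ u ∈ 𝒜, u ⊆ G) (hext : 𝒜.IsShatteringExtremal) (hs : 𝒜.Shatters s) :
    𝒜.StronglyShatters s := by
  induction G using Finset.induction_on generalizing 𝒜 s with
  | empty =>
    obtain ⟨u, hu, hsu⟩ := hs.exists_superset
    rw [subset_empty.mp (hsu.trans (hG u hu))]
    exact stronglyShatters_empty_of_nonempty hs.nonempty
  | @insert a G haG ih =>
    obtain ⟨hext₀, hext₁, hfilter⟩ := hext.nonMemberSubfamily_memberSubfamily a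
    have hG₀ : ∀ u ∈ nonMemberSubfamily a 𝒜, u ⊆ G := fun u hu =>
      (subset_insert_iff_of_notMem (mem_nonMemberSubfamily.mp hu).2).mp
        (hG u (mem_nonMemberSubfamily.mp hu).1)
    have hG₁ : ∀ u ∈ memberSubfamily a 𝒜, u ⊆ G := fun u hu =>
      (subset_insert_iff_of_notMem (mem_memberSubfamily.mp hu).2).mp
        ((subset_insert a u).trans (hG _ (mem_memberSubfamily.mp hu).1))
    by_cases has : a ∈ s
    · obtain ⟨hextInter, hshInter⟩ := hext₀.inter hext₁
        (hfilter ▸ shatterer_union_subset_filter_notMem)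
      have hsInter : (nonMemberSubfamily a 𝒜 ∩ memberSubfamily a 𝒜).Shatters (s.erase a) := by
        rw [← mem_shatterer, hshInter, mem_inter, mem_shatterer, mem_shatterer]
        exact ⟨hs.erase_nonMemberSubfamily has, hs.erase_memberSubfamily has⟩
      have := ih (fun u hu => hG₀ u (mem_inter.mp hu).1) hextInter hsInter
      rw [← insert_erase has]
      exact this.insert_of_inter
    · have hs' : s ∈ {s ∈ 𝒜.shatterer | a ∉ s} := mem_filter.mpr ⟨mem_shatterer.mpr hs, has⟩
      rcases mem_union.mp (hfilter ▸ hs') with hs₀ | hs₁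
      · exact (ih hG₀ hext₀ (mem_shatterer.mp hs₀)).mono (filter_subset _ 𝒜)
      · exact (ih hG₁ hext₁ (mem_shatterer.mp hs₁)).of_memberSubfamily has

lemma IsShatteringExtremal.stronglyShatters (h : 𝒜.IsShatteringExtremal) (hs : 𝒜.Shatters s) :
    𝒜.StronglyShatters s :=
  h.stronglyShatters_of_forall_subset (fun _ hu => le_sup (f := id) hu) hs

lemma Shatters.insert_of_cubes (hIs : Disjoint I s) (hJs : Disjoint J s)
    (hI : ∀ t ⊆ s, t ∪ I ∈ 𝒜) (hJ : ∀ t ⊆ s, t ∪ J ∈ 𝒜) (haI : a ∉ I) (haJ : a ∈ J) :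
    𝒜.Shatters (insert a s) := by
  intro t ht
  by_cases hat : a ∈ t
  · have hts : t.erase a ⊆ s := subset_insert_iff.mp ht
    refine ⟨t.erase a ∪ J, hJ _ hts, ?_⟩
    ext x
    have := @disjoint_left.mp hJs x
    have := @hts x
    grind
  · have hts : t ⊆ s := (subset_insert_iff_of_notMem hat).mp ht
    refine ⟨t ∪ I, hI t hts, ?_⟩
    ext x
    have := @disjoint_left.mp hIs x
    have := @hts x
    grind

lemma eq_of_cubes_of_maximal (hmax : ∀ a ∉ s, ¬ 𝒜.Shatters (insert a s))
    (hIs : Disjoint I s) (hJs : Disjoint J s)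
    (hI : ∀ t ⊆ s, t ∪ I ∈ 𝒜) (hJ : ∀ t ⊆ s, t ∪ J ∈ 𝒜) : I = J := by
  have key : ∀ {I J}, Disjoint I s → Disjoint J s → (∀ t ⊆ s, t ∪ I ∈ 𝒜) →
      (∀ t ⊆ s, t ∪ J ∈ 𝒜) → J ⊆ I := by
    intro I J hIs hJs hI hJ a haJ
    by_contra haI
    exact hmax a (disjoint_left.mp hJs haJ) (Shatters.insert_of_cubes hIs hJs hI hJ haI haJ)
  exact subset_antisymm (key hJs hIs hJ hI) (key hIs hJs hI hJ)

end Finset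

lemma Sh_eq_shatterer {n : ℕ} (𝓕 : Finset (Finset (Fin n))) : Sh 𝓕 = 𝓕.shatterer := by
  ext S
  simp only [Sh, Finset.mem_filter, Finset.mem_univ, true_and, Finset.mem_shatterer, Shatters,
    Finset.Shatters, Finset.inter_comm S]

/-- A maximal shattered set of a shattering-extremal family is uniquely strongly
shattered. -/
theorem maximal_shattered_unique_witness (n : ℕ) (𝓕 : Finset (Finset (Fin n)))
    (h : Extremal 𝓕) (S : Finset (Fin n)) (hS : S ∈ Sh 𝓕)
    (hmax : ∀ S' : Finset (Fin n), S ⊂ S' → S' ∉ Sh 𝓕) :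
    ∃! I : Finset (Fin n), I ⊆ Sᶜ ∧ ∀ H ⊆ S, H ∪ I ∈ 𝓕 := by
  rw [Sh_eq_shatterer] at hS hmax
  rw [Extremal, Sh_eq_shatterer] at h
  obtain ⟨I, hIS, hI⟩ := Finset.IsShatteringExtremal.stronglyShatters h (Finset.mem_shatterer.mp hS)
  refine ⟨I, ⟨Finset.subset_compl_iff_disjoint_right.mpr hIS, hI⟩, fun J ⟨hJS, hJ⟩ => ?_⟩
  exact Finset.eq_of_cubes_of_maximal (fun a ha has => hmax _ (Finset.ssubset_insert ha)
    (Finset.mem_shatterer.mpr has)) (Finset.subset_compl_iff_disjoint_right.mp hJS) hIS hJ hI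
end

section
/- Let F ⊆ 2^[n] be shattering-extremal, let α, β ∈ [n] be distinct elements such that {α, β} is not strongly shattered by F, and suppose there exist P, W, Q ∈ F with Q △ W = {α} and P △ W = {β}. Then the set V = W △ {α, β} does not belong to F, the system F ∪ {V} is shattering-extremal, and dim_VC(F ∪ {V}) ≤ max(dim_VC(F), 2). -/
open scoped symmDiff

/-!
Splitting a family `𝒜` at an element `a` into `𝒜₁` (members containing `a`, with `a` removed)
and `𝒜₀` (members avoiding `a`), the families `insert a '' Sh(𝒜₁ ∩ 𝒜₀)` and `Sh(𝒜₁ ∪ 𝒜₀)` are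
disjoint parts of `Sh(𝒜)`, while `|𝒜₁ ∩ 𝒜₀| + |𝒜₁ ∪ 𝒜₀| = |𝒜|`. By Pajor's inequality
`|ℬ| ≤ |Sh(ℬ)|`, extremality of `𝒜` forces equality throughout: `𝒜₁ ∩ 𝒜₀ ⊂ 𝒜` is extremal and
shatters `s \ {a}` whenever `a ∈ s ∈ Sh(𝒜)`. Induction shows that an extremal family strongly
shatters every set it shatters.

In the theorem the four sets `W ∆ D`, `D ⊆ {α, β}`, would strongly shatter `{α, β}`, so
`V ∉ 𝓕`, and `𝓕` does not shatter `{α, β}`. Adding `V` makes `{α, β}` shattered, and nothing else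
new: a newly shattered `S` contains `α` and `β` (otherwise `V` has the trace of `P` or `Q` on `S`),
and any further `γ ∈ S` would leave `S \ {γ} ⊇ {α, β}` shattered by `𝓕` alone.
-/

namespace Finset

variable {α : Type*} [DecidableEq α] {a b : α} {𝒜 : Finset (Finset α)} {s t u v w : Finset α}

lemma Shatters.notMem_of_forall_notMem (h : ∀ t ∈ 𝒜, a ∉ t) (hs : 𝒜.Shatters s) : a ∉ s := by
  obtain ⟨t, ht, hst⟩ := hs.exists_superset
  exact notMem_mono hst (h t ht)

lemma shatters_of_forall_union_mem (hd : Disjoint s u) (h : ∀ t ⊆ s, t ∪ u ∈ 𝒜) :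
    𝒜.Shatters s := fun t ht ↦
  ⟨t ∪ u, h t ht, by
    rw [inter_union_distrib_left, inter_eq_right.2 ht, disjoint_iff_inter_eq_empty.1 hd,
      union_empty]⟩

section Subfamily

variable (a 𝒜)

lemma card_memberSubfamily_inter_add_card_union :
    #(𝒜.memberSubfamily a ∩ 𝒜.nonMemberSubfamily a) +
      #(𝒜.memberSubfamily a ∪ 𝒜.nonMemberSubfamily a) = #𝒜 := by
  rw [card_inter_add_card_union, card_memberSubfamily_add_card_nonMemberSubfamily]

lemma memberSubfamily_inter_nonMemberSubfamily_subset :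
    𝒜.memberSubfamily a ∩ 𝒜.nonMemberSubfamily a ⊆ 𝒜 :=
  inter_subset_right.trans (filter_subset _ _)

variable {a 𝒜}

lemma Shatters.of_memberSubfamily_union_nonMemberSubfamily
    (hs : (𝒜.memberSubfamily a ∪ 𝒜.nonMemberSubfamily a).Shatters s) : 𝒜.Shatters s := by
  rw [memberSubfamily_union_nonMemberSubfamily] at hs
  have ha : a ∉ s := hs.notMem_of_forall_notMem (by simp)
  intro t ht
  obtain ⟨_, hmem, hst⟩ := hs ht
  obtain ⟨u, hu, rfl⟩ := mem_image.1 hmem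
  exact ⟨u, hu, by rwa [inter_erase, erase_eq_of_notMem (notMem_mono inter_subset_left ha)] at hst⟩

lemma Shatters.insert_of_memberSubfamily_inter_nonMemberSubfamily
    (hs : (𝒜.memberSubfamily a ∩ 𝒜.nonMemberSubfamily a).Shatters s) :
    𝒜.Shatters (insert a s) := by
  have ha : a ∉ s := hs.notMem_of_forall_notMem fun _ ht ↦
    (mem_nonMemberSubfamily.1 (mem_inter.1 ht).2).2
  simp_rw [Shatters, mem_inter, mem_memberSubfamily, mem_nonMemberSubfamily] at hs
  intro t ht
  rw [subset_insert_iff] at ht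
  obtain ⟨u, ⟨⟨hau, -⟩, hu, hua⟩, hsu⟩ := hs ht
  by_cases hat : a ∈ t
  · exact ⟨insert a u, hau, by rw [← insert_inter_distrib, hsu, insert_erase hat]⟩
  · exact ⟨u, hu, by rw [insert_inter_of_notMem hua, hsu, erase_eq_of_notMem hat]⟩

lemma notMem_of_mem_memberSubfamily_union_nonMemberSubfamily
    (ht : t ∈ 𝒜.memberSubfamily a ∪ 𝒜.nonMemberSubfamily a) : a ∉ t := by
  rcases mem_union.1 ht with ht | ht
  exacts [(mem_memberSubfamily.1 ht).2, (mem_nonMemberSubfamily.1 ht).2]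

variable (a 𝒜)

lemma image_insert_shatterer_union_shatterer_subset :
    (𝒜.memberSubfamily a ∩ 𝒜.nonMemberSubfamily a).shatterer.image (insert a) ∪
      (𝒜.memberSubfamily a ∪ 𝒜.nonMemberSubfamily a).shatterer ⊆ 𝒜.shatterer := by
  refine union_subset ?_ fun s hs ↦ ?_
  · intro _ hs
    obtain ⟨s, hs', rfl⟩ := mem_image.1 hs
    exact mem_shatterer.2 (mem_shatterer.1 hs').insert_of_memberSubfamily_inter_nonMemberSubfamily
  · exact mem_shatterer.2 (mem_shatterer.1 hs).of_memberSubfamily_union_nonMemberSubfamily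

lemma card_image_insert_shatterer_union_shatterer :
    #((𝒜.memberSubfamily a ∩ 𝒜.nonMemberSubfamily a).shatterer.image (insert a) ∪
      (𝒜.memberSubfamily a ∪ 𝒜.nonMemberSubfamily a).shatterer) =
      #(𝒜.memberSubfamily a ∩ 𝒜.nonMemberSubfamily a).shatterer +
        #(𝒜.memberSubfamily a ∪ 𝒜.nonMemberSubfamily a).shatterer := by
  have ha {ℬ : Finset (Finset α)} {s : Finset α}
      (hℬ : ℬ ⊆ 𝒜.memberSubfamily a ∪ 𝒜.nonMemberSubfamily a) (hs : s ∈ ℬ.shatterer) : a ∉ s :=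
    (mem_shatterer.1 hs).notMem_of_forall_notMem fun _ ht ↦
      notMem_of_mem_memberSubfamily_union_nonMemberSubfamily (hℬ ht)
  rw [card_union_of_disjoint, card_image_of_injOn]
  · intro s hs t ht hst
    rw [← erase_insert (ha inter_subset_union hs), hst, erase_insert (ha inter_subset_union ht)]
  · refine disjoint_left.2 fun s hs hs' ↦ ?_
    obtain ⟨s, -, rfl⟩ := mem_image.1 hs
    exact ha subset_rfl hs' (mem_insert_self _ _)

variable {a 𝒜}

lemma card_shatterer_eq_and_image_insert_shatterer_union_shatterer_eq
    (h : #𝒜.shatterer = #𝒜) :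
    #(𝒜.memberSubfamily a ∩ 𝒜.nonMemberSubfamily a).shatterer =
        #(𝒜.memberSubfamily a ∩ 𝒜.nonMemberSubfamily a) ∧
      (𝒜.memberSubfamily a ∩ 𝒜.nonMemberSubfamily a).shatterer.image (insert a) ∪
        (𝒜.memberSubfamily a ∪ 𝒜.nonMemberSubfamily a).shatterer = 𝒜.shatterer := by
  have hsub := image_insert_shatterer_union_shatterer_subset a 𝒜
  have hcard := card_image_insert_shatterer_union_shatterer a 𝒜
  have hinter := card_le_card_shatterer (𝒜.memberSubfamily a ∩ 𝒜.nonMemberSubfamily a)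
  have hunion := card_le_card_shatterer (𝒜.memberSubfamily a ∪ 𝒜.nonMemberSubfamily a)
  have hle := card_le_card hsub
  have hsplit := card_memberSubfamily_inter_add_card_union a 𝒜
  exact ⟨by omega, eq_of_subset_of_card_le hsub (by omega)⟩

lemma Shatters.erase_of_card_shatterer_eq (h : #𝒜.shatterer = #𝒜) (hs : 𝒜.Shatters s)
    (ha : a ∈ s) : (𝒜.memberSubfamily a ∩ 𝒜.nonMemberSubfamily a).Shatters (s.erase a) := by
  rw [← mem_shatterer,
    ← (card_shatterer_eq_and_image_insert_shatterer_union_shatterer_eq (a := a) h).2, mem_union,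
    mem_image] at hs
  obtain ⟨t, ht, rfl⟩ | hs := hs
  · rwa [erase_insert ((mem_shatterer.1 ht).notMem_of_forall_notMem fun _ hu ↦
      notMem_of_mem_memberSubfamily_union_nonMemberSubfamily (inter_subset_union hu)),
      ← mem_shatterer]
  · exact absurd ha ((mem_shatterer.1 hs).notMem_of_forall_notMem fun _ ↦
      notMem_of_mem_memberSubfamily_union_nonMemberSubfamily)

end Subfamily

theorem Shatters.exists_union_mem_of_card_shatterer_eq (h : #𝒜.shatterer = #𝒜)
    (hs : 𝒜.Shatters s) : ∃ u, Disjoint s u ∧ ∀ t ⊆ s, t ∪ u ∈ 𝒜 := by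
  induction 𝒜 using Finset.strongInduction generalizing s with
  | H 𝒜 ih =>
    obtain rfl | ⟨a, ha⟩ := s.eq_empty_or_nonempty
    · obtain ⟨u, hu⟩ := hs.nonempty
      exact ⟨u, disjoint_empty_left _, fun t ht ↦ by rwa [subset_empty.1 ht, empty_union]⟩
    have hssub : 𝒜.memberSubfamily a ∩ 𝒜.nonMemberSubfamily a ⊂ 𝒜 := by
      rw [ssubset_iff_of_subset (memberSubfamily_inter_nonMemberSubfamily_subset a 𝒜)]
      obtain ⟨t, ht, hst⟩ := hs.exists_superset
      exact ⟨t, ht, fun ht' ↦ (mem_nonMemberSubfamily.1 (mem_inter.1 ht').2).2 (hst ha)⟩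
    obtain ⟨u, hdu, hu⟩ := ih _ hssub
      (card_shatterer_eq_and_image_insert_shatterer_union_shatterer_eq h).1
      (hs.erase_of_card_shatterer_eq h ha)
    have hau : a ∉ u := by
      have hmem := hu ∅ (empty_subset _)
      rw [empty_union, mem_inter, mem_nonMemberSubfamily] at hmem
      exact hmem.2.2
    refine ⟨u, ?_, fun t ht ↦ ?_⟩
    · rw [← insert_erase ha, disjoint_insert_left]
      exact ⟨hau, hdu⟩
    obtain ⟨h₁, h₀⟩ := mem_inter.1 (hu (t.erase a) (erase_subset_erase a ht))
    by_cases hat : a ∈ t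
    · rw [← insert_erase hat, insert_union]
      exact (mem_memberSubfamily.1 h₁).1
    · rw [erase_eq_of_notMem hat] at h₀
      exact (mem_nonMemberSubfamily.1 h₀).1

lemma inter_symmDiff_distrib_left (s t u : Finset α) : s ∩ t ∆ u = (s ∩ t) ∆ (s ∩ u) :=
  inf_symmDiff_distrib_left s t u

lemma symmDiff_mem_of_subset_pair (hw : w ∈ 𝒜) (ha : w ∆ {a} ∈ 𝒜) (hb : w ∆ {b} ∈ 𝒜)
    (hab : w ∆ {a, b} ∈ 𝒜) (ht : t ⊆ {a, b}) : w ∆ t ∈ 𝒜 := by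
  rw [← coe_subset, coe_pair, Set.subset_pair_iff_eq, coe_eq_empty, coe_eq_singleton,
    coe_eq_singleton, coe_eq_pair] at ht
  obtain rfl | rfl | rfl | rfl := ht
  · rwa [← bot_eq_empty, symmDiff_bot]
  all_goals assumption

lemma union_sdiff_eq_symmDiff_inter (ht : t ⊆ s) : t ∪ (w \ s) = w ∆ ((w ∆ t) ∩ s) := by
  ext x
  have hx := @ht x
  simp only [mem_union, mem_sdiff, mem_symmDiff, mem_inter]
  tauto

lemma union_sdiff_pair_mem (hw : w ∈ 𝒜) (ha : w ∆ {a} ∈ 𝒜) (hb : w ∆ {b} ∈ 𝒜)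
    (hab : w ∆ {a, b} ∈ 𝒜) (ht : t ⊆ {a, b}) : t ∪ (w \ {a, b}) ∈ 𝒜 := by
  rw [union_sdiff_eq_symmDiff_inter ht]
  exact symmDiff_mem_of_subset_pair hw ha hb hab inter_subset_right

lemma Shatters.of_insert_of_inter_eq (hs : (insert v 𝒜).Shatters s) (hu : u ∈ 𝒜)
    (hvu : s ∩ v = s ∩ u) : 𝒜.Shatters s := fun t ht ↦ by
  obtain ⟨x, hx, hst⟩ := hs ht
  rcases mem_insert.1 hx with rfl | hx
  exacts [⟨u, hu, hvu ▸ hst⟩, ⟨x, hx, hst⟩]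

lemma Shatters.erase_of_insert (hs : (insert v 𝒜).Shatters s) (ha : a ∈ s) :
    𝒜.Shatters (s.erase a) := by
  intro t ht
  have hts : t ⊆ s := ht.trans (erase_subset a s)
  have hat : a ∉ t := notMem_mono ht (notMem_erase a s)
  obtain ⟨x, hx, hxt⟩ := hs hts
  obtain ⟨y, hy, hyt⟩ := hs (insert_subset ha hts)
  rcases mem_insert.1 hx with rfl | hx
  · rcases mem_insert.1 hy with rfl | hy
    · rw [hxt] at hyt
      exact absurd (hyt ▸ mem_insert_self a t) hat
    · exact ⟨y, hy, by rw [erase_inter, hyt, erase_insert hat]⟩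
  · exact ⟨x, hx, by rw [erase_inter, hxt, erase_eq_of_notMem hat]⟩

lemma Shatters.eq_pair_of_insert_symmDiff_pair (hwa : w ∆ {a} ∈ 𝒜) (hwb : w ∆ {b} ∈ 𝒜)
    (hab : ¬ 𝒜.Shatters {a, b}) (hs : (insert (w ∆ {a, b}) 𝒜).Shatters s)
    (hns : ¬ 𝒜.Shatters s) : s = {a, b} := by
  have has : a ∈ s := by
    by_contra has
    refine hns (hs.of_insert_of_inter_eq hwb ?_)
    rw [inter_symmDiff_distrib_left, inter_symmDiff_distrib_left, inter_insert_of_notMem has]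
  have hbs : b ∈ s := by
    by_contra hbs
    refine hns (hs.of_insert_of_inter_eq hwa ?_)
    rw [inter_symmDiff_distrib_left, inter_symmDiff_distrib_left, pair_comm,
      inter_insert_of_notMem hbs]
  have habs : {a, b} ⊆ s := insert_subset has (singleton_subset_iff.2 hbs)
  refine subset_antisymm (fun c hc ↦ ?_) habs
  by_contra hcab
  exact hab ((hs.erase_of_insert hc).mono_right fun x hx ↦
    mem_erase.2 ⟨fun hxc ↦ hcab (by rwa [← hxc]), habs hx⟩)

lemma shatterer_insert_symmDiff_pair (hw : w ∈ 𝒜) (hwa : w ∆ {a} ∈ 𝒜) (hwb : w ∆ {b} ∈ 𝒜)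
    (hab : ¬ 𝒜.Shatters {a, b}) :
    (insert (w ∆ {a, b}) 𝒜).shatterer = insert {a, b} 𝒜.shatterer := by
  refine subset_antisymm (fun s hs ↦ ?_) (insert_subset ?_ (shatterer_mono (subset_insert _ _)))
  · rw [mem_shatterer] at hs
    rw [mem_insert, mem_shatterer]
    by_cases hns : 𝒜.Shatters s
    · exact Or.inr hns
    · exact Or.inl (hs.eq_pair_of_insert_symmDiff_pair hwa hwb hab hns)
  · exact mem_shatterer.2 <| shatters_of_forall_union_mem (u := w \ {a, b}) disjoint_sdiff
      fun _ ↦ union_sdiff_pair_mem (mem_insert_of_mem hw) (mem_insert_of_mem hwa)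
        (mem_insert_of_mem hwb) (mem_insert_self _ _)

end Finset

section FinFamily

variable {n : ℕ} {𝓕 : Finset (Finset (Fin n))}

lemma shatters_iff_finset_shatters {S : Finset (Fin n)} : Shatters 𝓕 S ↔ 𝓕.Shatters S := by
  simp only [Shatters, Finset.Shatters, Finset.inter_comm]

lemma sh_eq_shatterer : Sh 𝓕 = 𝓕.shatterer := by
  ext S
  simp [Sh, shatters_iff_finset_shatters]

lemma extremal_iff : Extremal 𝓕 ↔ 𝓕.shatterer.card = 𝓕.card := by
  rw [Extremal, sh_eq_shatterer]

lemma dimVC_eq_vcDim : dimVC 𝓕 = 𝓕.vcDim := by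
  rw [dimVC, sh_eq_shatterer, Finset.vcDim]

lemma stronglyShatters_iff {S : Finset (Fin n)} :
    StronglyShatters 𝓕 S ↔ ∃ u, Disjoint S u ∧ ∀ t ⊆ S, t ∪ u ∈ 𝓕 := by
  simp only [StronglyShatters, Finset.subset_compl_iff_disjoint_left]

end FinFamily

theorem stepB_extremal_general (n : ℕ) (𝓕 : Finset (Finset (Fin n))) (h : Extremal 𝓕)
    (α β : Fin n)
    (hst : ¬ StronglyShatters 𝓕 ({α, β} : Finset (Fin n)))
    (P W Q : Finset (Fin n)) (hP : P ∈ 𝓕) (hW : W ∈ 𝓕) (hQ : Q ∈ 𝓕)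
    (hQW : Q ∆ W = ({α} : Finset (Fin n))) (hPW : P ∆ W = ({β} : Finset (Fin n))) :
    W ∆ ({α, β} : Finset (Fin n)) ∉ 𝓕 ∧
      Extremal (insert (W ∆ ({α, β} : Finset (Fin n))) 𝓕) ∧
      dimVC (insert (W ∆ ({α, β} : Finset (Fin n))) 𝓕) ≤ max (dimVC 𝓕) 2 := by
  obtain rfl : Q = W ∆ {α} := by rw [← hQW, symmDiff_comm Q, symmDiff_symmDiff_cancel_left]
  obtain rfl : P = W ∆ {β} := by rw [← hPW, symmDiff_comm P, symmDiff_symmDiff_cancel_left]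
  have hpair : ¬ 𝓕.Shatters {α, β} := fun hs ↦
    hst (stronglyShatters_iff.2 (hs.exists_union_mem_of_card_shatterer_eq (extremal_iff.1 h)))
  have hV : W ∆ {α, β} ∉ 𝓕 := fun hV ↦ hst (stronglyShatters_iff.2
    ⟨_, Finset.disjoint_sdiff, fun _ ↦ Finset.union_sdiff_pair_mem hW hQ hP hV⟩)
  have hSh := Finset.shatterer_insert_symmDiff_pair hW hQ hP hpair
  refine ⟨hV, ?_, ?_⟩
  · rw [extremal_iff, hSh, Finset.card_insert_of_notMem (mt Finset.mem_shatterer.1 hpair),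
      Finset.card_insert_of_notMem hV, extremal_iff.1 h]
  · rw [dimVC_eq_vcDim, dimVC_eq_vcDim, Finset.vcDim, Finset.vcDim, hSh, Finset.sup_insert,
      max_comm]
    exact max_le_max_left _ Finset.card_le_two

/-- Step B: if `{α, β}` is not strongly shattered by the shattering-extremal family
`𝓕` and `P, W, Q ∈ 𝓕` satisfy `Q ∆ W = {α}`, `P ∆ W = {β}`, then `V = W ∆ {α, β}`
is not in `𝓕`, `𝓕 ∪ {V}` is shattering-extremal, and
`dimVC (𝓕 ∪ {V}) ≤ max (dimVC 𝓕) 2`. -/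
theorem stepB_extremal (n : ℕ) (𝓕 : Finset (Finset (Fin n))) (h : Extremal 𝓕)
    (α β : Fin n) (hne : α ≠ β)
    (hst : ¬ StronglyShatters 𝓕 ({α, β} : Finset (Fin n)))
    (P W Q : Finset (Fin n)) (hP : P ∈ 𝓕) (hW : W ∈ 𝓕) (hQ : Q ∈ 𝓕)
    (hQW : Q ∆ W = ({α} : Finset (Fin n))) (hPW : P ∆ W = ({β} : Finset (Fin n))) :
    W ∆ ({α, β} : Finset (Fin n)) ∉ 𝓕 ∧
      Extremal (insert (W ∆ ({α, β} : Finset (Fin n))) 𝓕) ∧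
      dimVC (insert (W ∆ ({α, β} : Finset (Fin n))) 𝓕) ≤ max (dimVC 𝓕) 2 :=
  stepB_extremal_general n 𝓕 h α β hst P W Q hP hW hQ hQW hPW
end
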